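/- arXiv:1011.4776 — 3 statements merged into one kernel-verified Lean document; each statement's English description precedes it below -/
import Mathlib

section
/- Under the stated Bourgain–Delbaen assumptions, there exists exactly one admissible pair of families ((d_γ)_{γ∈Γ}, (P_q)_{q≥0}), i.e. the vectors d_γ ∈ ℓ¹(Γ) and the bounded linear operators P_q on ℓ¹(Γ) are uniquely determined by properties (A) and (B). -/
noncomputable section

/-- `ℓ¹(Γ)`. -/
abbrev ellOne (Γ : Type*) : Type _ := lp (fun _ : Γ => ℝ) 1

/-- The coordinate vector `e_γ` in `ℓ¹(Γ)`. -/
noncomputable def eVec {Γ : Type*} (γ : Γ) : ellOne Γ :=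
  letI := Classical.decEq Γ
  lp.single 1 γ (1 : ℝ)

/-- The datum `τ(γ)` attached to an element `γ` in a Bourgain–Delbaen construction:
Type 0, Type 1 or Type 2. -/
inductive BDDatum (Γ : Type*) where
  | type0 (α : ℝ) (ξ : Γ)
  | type1 (p : ℕ) (β : ℝ) (b : ellOne Γ)
  | type2 (α : ℝ) (ξ : Γ) (p : ℕ) (β : ℝ) (b : ellOne Γ)

/-- The data of a Bourgain–Delbaen construction: pairwise disjoint nonempty finite
sets `Δ_q` (`q ≥ 1`) covering `Γ`, a constant `0 < θ < 1/2`, and an assignment `τ`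
of a datum of Type 0, 1 or 2 to each `γ ∈ Δ_{q+1}`, `q ≥ 1`.
Here `⋃ p ∈ Set.Icc 1 q, Δ p` plays the role of `Γ_q` (empty for `q = 0`). -/
structure BDData (Γ : Type*) where
  Δ : ℕ → Set Γ
  Δ_finite : ∀ q, 1 ≤ q → (Δ q).Finite
  Δ_nonempty : ∀ q, 1 ≤ q → (Δ q).Nonempty
  Δ_disjoint : ∀ p q, 1 ≤ p → 1 ≤ q → p ≠ q → Disjoint (Δ p) (Δ q)
  Δ_cover : ⋃ q ∈ {q : ℕ | 1 ≤ q}, Δ q = Set.univ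
  θ : ℝ
  θ_pos : 0 < θ
  θ_lt_half : θ < 1 / 2
  τ : Γ → BDDatum Γ
  τ_spec : ∀ q, 1 ≤ q → ∀ γ ∈ Δ (q + 1),
    match τ γ with
    | .type0 α ξ => 0 ≤ α ∧ α ≤ 1 ∧ ξ ∈ ⋃ r ∈ Set.Icc 1 q, Δ r
    | .type1 p β b => p < q ∧ 0 < β ∧ β ≤ θ ∧ ‖b‖ ≤ 1 ∧
        ∀ γ' : Γ, γ' ∉ (⋃ r ∈ Set.Icc 1 q, Δ r) \ (⋃ r ∈ Set.Icc 1 p, Δ r) → b γ' = 0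
    | .type2 α ξ p β b => 0 < α ∧ α ≤ 1 ∧ 1 ≤ p ∧ p < q ∧
        ξ ∈ (⋃ r ∈ Set.Icc 1 p, Δ r) ∧ 0 < β ∧ β ≤ θ ∧ ‖b‖ ≤ 1 ∧
        ∀ γ' : Γ, γ' ∉ (⋃ r ∈ Set.Icc 1 q, Δ r) \ (⋃ r ∈ Set.Icc 1 p, Δ r) → b γ' = 0

/-- A pair of families `(d_γ)_{γ ∈ Γ}`, `(P_q)_{q ≥ 0}` is admissible if `P_0 = 0` and
properties (A) and (B) of the Bourgain–Delbaen construction hold. -/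
def Admissible {Γ : Type*} (D : BDData Γ) (d : Γ → ellOne Γ)
    (P : ℕ → ellOne Γ →L[ℝ] ellOne Γ) : Prop :=
  P 0 = 0 ∧
  (∀ q, 1 ≤ q → ∀ γ : Γ,
    (γ ∈ ⋃ r ∈ Set.Icc 1 q, D.Δ r → P q (d γ) = d γ) ∧
    (γ ∉ ⋃ r ∈ Set.Icc 1 q, D.Δ r → P q (d γ) = 0)) ∧
  (∀ γ ∈ D.Δ 1, eVec γ - d γ = 0) ∧
  (∀ q, 1 ≤ q → ∀ γ ∈ D.Δ (q + 1),
    eVec γ - d γ =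
      match D.τ γ with
      | .type0 α ξ => α • eVec ξ
      | .type1 p β b => β • ((b : ellOne Γ) - P p b)
      | .type2 α ξ p β b => α • eVec ξ + β • ((b : ellOne Γ) - P p b))

/-!
All three types of datum describe `c_γ` as `a + β (b - P_p b)`, with `a` and `b` supported on ranks
below that of `γ`. Uniqueness: by induction on the rank, `P_q e_η` is known for every `η` of lower
rank, hence so are `c_γ`, `d_γ = e_γ - c_γ` and `P_q e_γ = P_q d_γ + P_q c_γ`, where `P_q d_γ` is
`d_γ` or `0` by (A). Existence: for `γ ∉ Γ_q`, (A) and (B) force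
`P_q e_γ = P_q c_γ = P_q a + β (P_q b - P_{min(p,q)} b)` once `P_q P_p = P_{min(p,q)}` is known.
Taking this (and `P_q e_γ = e_γ` for `γ ∈ Γ_q`) as a recursive definition of the columns of `P_q`,
they are bounded by `M = 1 / (1 - 2θ)` because `1 + 2θM = M`, so they define bounded operators;
`P_t P_s = P_{min(s,t)}` follows by induction on the rank, and then `d_γ = e_γ - c_γ` satisfies
(A) and (B).
-/

namespace ellOne

variable {ι : Type*}

def supported (s : Set ι) : Submodule ℝ (ellOne ι) where
  carrier := {x | ∀ i ∉ s, x i = 0}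
  zero_mem' _ _ := rfl
  add_mem' hx hy i hi := by simp [hx i hi, hy i hi]
  smul_mem' c x hx i hi := by simp [hx i hi]

lemma supported_mono {s t : Set ι} (h : s ⊆ t) : supported s ≤ supported t :=
  fun _ hx i hi => hx i fun hs => hi (h hs)

lemma hasSum_norm (x : ellOne ι) : HasSum (fun i => ‖x i‖) ‖x‖ := by
  simpa using lp.hasSum_norm (p := 1) (by norm_num) x

lemma eVec_apply_self (i : ι) : eVec i i = 1 := by
  classical
  simp [eVec]

lemma eVec_apply_of_ne {i j : ι} (h : j ≠ i) : eVec i j = 0 := by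
  classical
  simp [eVec, lp.single_apply, h]

lemma eVec_mem_supported {s : Set ι} {i : ι} (hi : i ∈ s) : eVec i ∈ supported s :=
  fun _ hj => eVec_apply_of_ne fun h => hj (h ▸ hi)

lemma norm_eVec (i : ι) : ‖eVec i‖ = 1 := by
  classical
  simpa only [eVec, norm_one] using lp.norm_single (E := fun _ : ι => ℝ) one_pos i (1 : ℝ)

lemma norm_smul_eVec_le {α : ℝ} (h0 : 0 ≤ α) (h1 : α ≤ 1) (i : ι) : ‖α • eVec i‖ ≤ 1 := by
  rwa [norm_smul, norm_eVec, mul_one, Real.norm_of_nonneg h0]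

lemma hasSum_smul_eVec (x : ellOne ι) : HasSum (fun i => x i • eVec i) x := by
  classical
  refine (lp.hasSum_single ENNReal.one_ne_top x).congr_fun fun i => ?_
  rw [eVec, ← lp.single_smul, smul_eq_mul, mul_one]

lemma tsum_smul_congr {E : Type*} [AddCommGroup E] [Module ℝ E] [TopologicalSpace E]
    {x : ellOne ι} {v w : ι → E} (h : ∀ i, x i ≠ 0 → v i = w i) :
    ∑' i, x i • v i = ∑' i, x i • w i :=
  tsum_congr fun i => by
    by_cases hi : x i = 0
    · simp [hi]
    · rw [h i hi]

variable {E : Type*} [NormedAddCommGroup E] [NormedSpace ℝ E]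

lemma hasSum_apply (T : ellOne ι →L[ℝ] E) (x : ellOne ι) :
    HasSum (fun i => x i • T (eVec i)) (T x) := by
  simpa only [map_smul] using (hasSum_smul_eVec x).mapL T

lemma apply_eq_of_supported {s : Set ι} {T T' : ellOne ι →L[ℝ] E}
    (h : ∀ i ∈ s, T (eVec i) = T' (eVec i)) {x : ellOne ι} (hx : x ∈ supported s) :
    T x = T' x := by
  rw [← (hasSum_apply T x).tsum_eq, ← (hasSum_apply T' x).tsum_eq]
  exact tsum_smul_congr fun i hi => h i (by_contra fun hs => hi (hx i hs))

lemma ext_eVec {T T' : ellOne ι →L[ℝ] E} (h : ∀ i, T (eVec i) = T' (eVec i)) : T = T' :=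
  ContinuousLinearMap.ext fun _ =>
    apply_eq_of_supported (s := Set.univ) (fun i _ => h i) fun _ hi => absurd trivial hi

lemma apply_mem_supported {s t : Set ι} {T : ellOne ι →L[ℝ] ellOne ι}
    (h : ∀ i ∈ s, T (eVec i) ∈ supported t) {x : ellOne ι} (hx : x ∈ supported s) :
    T x ∈ supported t := by
  intro j hj
  have hsum := (hasSum_apply T x).mapL (lp.evalCLM ℝ (fun _ : ι => ℝ) 1 j)
  refine hsum.unique (hasSum_zero.congr_fun fun i => ?_)
  by_cases hi : i ∈ s
  · simp [lp.evalCLM, h i hi j hj]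
  · simp [lp.evalCLM, hx i hi]

variable {v : ι → E} {M : ℝ}

lemma norm_smul_le_of_norm_le (hv : ∀ i, ‖v i‖ ≤ M) (x : ellOne ι) (i : ι) :
    ‖x i • v i‖ ≤ ‖x i‖ * M := by
  rw [norm_smul]
  exact mul_le_mul_of_nonneg_left (hv i) (norm_nonneg _)

lemma norm_tsum_smul_le (hv : ∀ i, ‖v i‖ ≤ M) (x : ellOne ι) :
    ‖∑' i, x i • v i‖ ≤ M * ‖x‖ := by
  rw [mul_comm]
  exact tsum_of_norm_bounded ((hasSum_norm x).mul_right M) (norm_smul_le_of_norm_le hv x)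

variable [CompleteSpace E]

lemma summable_smul (hv : ∀ i, ‖v i‖ ≤ M) (x : ellOne ι) : Summable fun i => x i • v i :=
  .of_norm_bounded ((hasSum_norm x).summable.mul_right M) (norm_smul_le_of_norm_le hv x)

def lift (v : ι → E) (M : ℝ) (hv : ∀ i, ‖v i‖ ≤ M) : ellOne ι →L[ℝ] E :=
  LinearMap.mkContinuous
    { toFun x := ∑' i, x i • v i
      map_add' x y := by
        rw [← (summable_smul hv x).tsum_add (summable_smul hv y)]
        simp only [lp.coeFn_add, Pi.add_apply, add_smul]
      map_smul' c x := by
        rw [RingHom.id_apply, ← (summable_smul hv x).tsum_const_smul c]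
        simp only [lp.coeFn_smul, Pi.smul_apply, smul_eq_mul, mul_smul] }
    M (norm_tsum_smul_le hv)

lemma lift_apply (hv : ∀ i, ‖v i‖ ≤ M) (x : ellOne ι) : lift v M hv x = ∑' i, x i • v i :=
  rfl

lemma lift_eVec (hv : ∀ i, ‖v i‖ ≤ M) (i : ι) : lift v M hv (eVec i) = v i := by
  rw [lift_apply, tsum_eq_single i fun j hj => by rw [eVec_apply_of_ne hj, zero_smul],
    eVec_apply_self, one_smul]

end ellOne

/-- The coefficients of `c = a + β • (b - P p b)`. -/
structure CData (Γ : Type*) where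
  a : ellOne Γ
  p : ℕ
  β : ℝ
  b : ellOne Γ

structure CData.Valid {Γ : Type*} (t : CData Γ) (rank : Γ → ℕ) (θ : ℝ) (n : ℕ) : Prop where
  p_lt : t.p < n
  norm_a_le : ‖t.a‖ ≤ 1
  a_mem : t.a ∈ ellOne.supported {η | rank η ≤ t.p}
  β_nonneg : 0 ≤ t.β
  β_le : t.β ≤ θ
  norm_b_le : ‖t.b‖ ≤ 1
  b_mem : t.b ∈ ellOne.supported {η | rank η < n}

def CData.c {Γ : Type*} (t : CData Γ) (P : ℕ → ellOne Γ →L[ℝ] ellOne Γ) : ellOne Γ :=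
  t.a + t.β • (t.b - P t.p t.b)

lemma CData.Valid.a_mem_lt {Γ : Type*} {t : CData Γ} {rank : Γ → ℕ} {θ : ℝ} {n : ℕ}
    (h : t.Valid rank θ n) : t.a ∈ ellOne.supported {η | rank η < n} :=
  ellOne.supported_mono (fun _ hη => lt_of_le_of_lt hη h.p_lt) h.a_mem

/-- A Bourgain–Delbaen construction in normal form: `Γ_q = {γ | rank γ ≤ q}` and
`c_γ = (datum γ).c P`. -/
structure BDSystem (Γ : Type*) where
  rank : Γ → ℕ
  rank_pos : ∀ γ, 0 < rank γ
  θ : ℝ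
  θ_nonneg : 0 ≤ θ
  θ_lt_half : θ < 1 / 2
  datum : Γ → CData Γ
  valid : ∀ γ, (datum γ).Valid rank θ (rank γ)

namespace BDSystem

open ellOne

variable {Γ : Type*} (S : BDSystem Γ)

@[elab_as_elim]
lemma induction_rank {motive : Γ → Prop} (γ : Γ)
    (step : ∀ γ, (∀ η, S.rank η < S.rank γ → motive η) → motive γ) : motive γ :=
  (measure S.rank).wf.induction γ step

/-- The column `P_q e_γ`, by recursion on the rank of `γ`. The guards `rank η < rank γ` are only
there for termination: they hold on the supports of `a` and `b`. -/
def col (q : ℕ) (γ : Γ) : ellOne Γ :=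
  if S.rank γ ≤ q then eVec γ
  else
    let T : ℕ → ellOne Γ → ellOne Γ :=
      fun r x => ∑' η, x η • if _ : S.rank η < S.rank γ then col r η else 0
    T q (S.datum γ).a + (S.datum γ).β •
      (T q (S.datum γ).b - T (min (S.datum γ).p q) (S.datum γ).b)
termination_by S.rank γ

def truncSum (n r : ℕ) (x : ellOne Γ) : ellOne Γ :=
  ∑' η, x η • if _ : S.rank η < n then S.col r η else 0

lemma col_of_le {q : ℕ} {γ : Γ} (h : S.rank γ ≤ q) : S.col q γ = eVec γ := by
  rw [col, if_pos h]

lemma col_of_lt {q : ℕ} {γ : Γ} (h : q < S.rank γ) :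
    S.col q γ = S.truncSum (S.rank γ) q (S.datum γ).a + (S.datum γ).β •
      (S.truncSum (S.rank γ) q (S.datum γ).b -
        S.truncSum (S.rank γ) (min (S.datum γ).p q) (S.datum γ).b) := by
  rw [col, if_neg h.not_ge]
  rfl

/-- The solution `M = 1 / (1 - 2θ)` of `M = 1 + 2θM`, a uniform bound for the `‖P_q‖`. -/
def bound : ℝ := (1 - 2 * S.θ)⁻¹

lemma one_le_bound : 1 ≤ S.bound :=
  one_le_inv₀ (by linarith [S.θ_lt_half]) |>.2 (by linarith [S.θ_nonneg])

lemma one_add_two_mul_θ_mul_bound : 1 + 2 * S.θ * S.bound = S.bound := by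
  have : 1 - 2 * S.θ ≠ 0 := by linarith [S.θ_lt_half]
  rw [bound]
  field_simp
  ring

lemma truncSum_of_mem_supported {n r : ℕ} {x : ellOne Γ}
    (hx : x ∈ supported {η | S.rank η < n ∧ S.rank η ≤ r}) : S.truncSum n r x = x := by
  refine (tsum_smul_congr fun η hη => ?_).trans (hasSum_smul_eVec x).tsum_eq
  obtain ⟨hn, hr⟩ : S.rank η < n ∧ S.rank η ≤ r := by_contra fun h => hη (hx η h)
  rw [dif_pos hn, S.col_of_le hr]

lemma norm_col_le (q : ℕ) (γ : Γ) : ‖S.col q γ‖ ≤ S.bound := by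
  induction γ using S.induction_rank generalizing q with
  | step γ ih =>
    rcases le_or_gt (S.rank γ) q with hle | hlt
    · rw [S.col_of_le hle, norm_eVec]
      exact S.one_le_bound
    have hM : 0 ≤ S.bound := zero_le_one.trans S.one_le_bound
    have htrunc (r : ℕ) (x : ellOne Γ) : ‖S.truncSum (S.rank γ) r x‖ ≤ S.bound * ‖x‖ := by
      refine norm_tsum_smul_le (fun η => ?_) x
      split_ifs with hη
      exacts [ih η hη r, by simpa using hM]
    have hv := S.valid γ
    rw [S.col_of_lt hlt]
    generalize S.datum γ = t at hv ⊢
    obtain ⟨a, p, β, b⟩ := t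
    obtain ⟨hp, ha, ha_mem, hβ, hβθ, hb, -⟩ := hv
    dsimp only at *
    rcases le_or_gt q p with hqp | hpq
    · rw [min_eq_right hqp, sub_self, smul_zero, add_zero]
      exact (htrunc q a).trans (mul_le_of_le_one_right hM ha)
    · rw [min_eq_left hpq.le, S.truncSum_of_mem_supported (supported_mono
        (fun η (h : S.rank η ≤ p) => (⟨by omega, by omega⟩ : S.rank η < S.rank γ ∧ S.rank η ≤ q))
        ha_mem)]
      calc ‖a + β • (S.truncSum (S.rank γ) q b - S.truncSum (S.rank γ) p b)‖
          ≤ ‖a‖ + β * (‖S.truncSum (S.rank γ) q b‖ + ‖S.truncSum (S.rank γ) p b‖) := by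
            refine (norm_add_le _ _).trans ?_
            rw [norm_smul, Real.norm_of_nonneg hβ]
            gcongr
            exact norm_sub_le _ _
        _ ≤ 1 + S.θ * (S.bound + S.bound) := by
            gcongr
            · exact S.θ_nonneg
            all_goals exact (htrunc _ b).trans (mul_le_of_le_one_right hM hb)
        _ = S.bound := by linarith [S.one_add_two_mul_θ_mul_bound]

/-- The projection `P_q`. -/
def proj (q : ℕ) : ellOne Γ →L[ℝ] ellOne Γ :=
  lift (S.col q) S.bound (S.norm_col_le q)

lemma proj_eVec (q : ℕ) (γ : Γ) : S.proj q (eVec γ) = S.col q γ :=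
  lift_eVec _ γ

lemma truncSum_eq_proj {n r : ℕ} {x : ellOne Γ} (hx : x ∈ supported {η | S.rank η < n}) :
    S.truncSum n r x = S.proj r x :=
  tsum_smul_congr fun η hη => dif_pos (by_contra fun h => hη (hx η h))

lemma proj_eVec_of_le {q : ℕ} {γ : Γ} (h : S.rank γ ≤ q) : S.proj q (eVec γ) = eVec γ := by
  rw [proj_eVec, S.col_of_le h]

lemma proj_eVec_of_lt {q : ℕ} {γ : Γ} (h : q < S.rank γ) :
    S.proj q (eVec γ) = S.proj q (S.datum γ).a + (S.datum γ).β •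
      (S.proj q (S.datum γ).b - S.proj (min (S.datum γ).p q) (S.datum γ).b) := by
  have hv := S.valid γ
  rw [proj_eVec, S.col_of_lt h, S.truncSum_eq_proj hv.a_mem_lt, S.truncSum_eq_proj hv.b_mem,
    S.truncSum_eq_proj hv.b_mem]

lemma proj_eq_self {q : ℕ} {x : ellOne Γ} (hx : x ∈ supported {η | S.rank η ≤ q}) :
    S.proj q x = x :=
  apply_eq_of_supported (T' := .id ℝ _) (fun _ hη => S.proj_eVec_of_le hη) hx

lemma proj_eVec_mem_supported (q : ℕ) (γ : Γ) :
    S.proj q (eVec γ) ∈ supported {η | S.rank η ≤ S.rank γ} := by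
  induction γ using S.induction_rank generalizing q with
  | step γ ih =>
    rcases le_or_gt (S.rank γ) q with hle | hlt
    · rw [S.proj_eVec_of_le hle]
      exact eVec_mem_supported (Set.mem_ofPred.2 le_rfl)
    have hv := S.valid γ
    have hproj (r : ℕ) {x : ellOne Γ} (hx : x ∈ supported {η | S.rank η < S.rank γ}) :
        S.proj r x ∈ supported {η | S.rank η ≤ S.rank γ} :=
      apply_mem_supported (fun η (hη : S.rank η < S.rank γ) =>
        supported_mono (fun _ (h : _ ≤ S.rank η) => le_trans h hη.le) (ih η hη r)) hx
    rw [S.proj_eVec_of_lt hlt]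
    exact add_mem (hproj q hv.a_mem_lt)
      (Submodule.smul_mem _ _ (sub_mem (hproj q hv.b_mem) (hproj _ hv.b_mem)))

lemma proj_mem_supported {n q : ℕ} {x : ellOne Γ} (hx : x ∈ supported {η | S.rank η < n}) :
    S.proj q x ∈ supported {η | S.rank η < n} :=
  apply_mem_supported (fun η (hη : S.rank η < n) =>
    supported_mono (fun _ (h : _ ≤ S.rank η) => lt_of_le_of_lt h hη)
      (S.proj_eVec_mem_supported q η)) hx

lemma proj_comp_proj (s t : ℕ) : (S.proj t).comp (S.proj s) = S.proj (min s t) := by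
  refine ext_eVec fun γ => ?_
  induction γ using S.induction_rank generalizing s t with
  | step γ ih =>
    rw [ContinuousLinearMap.comp_apply]
    rcases le_or_gt (S.rank γ) s with hs | hs
    · rw [S.proj_eVec_of_le hs]
      rcases le_or_gt (S.rank γ) t with ht | ht
      · rw [S.proj_eVec_of_le ht, S.proj_eVec_of_le (le_min hs ht)]
      · rw [min_eq_right (by omega)]
    have hv := S.valid γ
    have hcomp (r u : ℕ) {x : ellOne Γ} (hx : x ∈ supported {η | S.rank η < S.rank γ}) :
        S.proj u (S.proj r x) = S.proj (min r u) x :=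
      apply_eq_of_supported (T := (S.proj u).comp (S.proj r)) (fun η hη => ih η hη r u) hx
    rw [S.proj_eVec_of_lt hs, S.proj_eVec_of_lt (min_lt_of_left_lt hs), map_add, map_smul, map_sub,
      hcomp _ _ hv.a_mem_lt, hcomp _ _ hv.b_mem, hcomp _ _ hv.b_mem, min_assoc]

lemma proj_proj (s t : ℕ) (x : ellOne Γ) : S.proj t (S.proj s x) = S.proj (min s t) x := by
  rw [← S.proj_comp_proj, ContinuousLinearMap.comp_apply]

lemma proj_zero : S.proj 0 = 0 := by
  refine ext_eVec fun γ => ?_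
  induction γ using S.induction_rank with
  | step γ ih =>
    rw [S.proj_eVec_of_lt (S.rank_pos γ), min_eq_right (Nat.zero_le _), sub_self, smul_zero,
      add_zero]
    exact apply_eq_of_supported ih (S.valid γ).a_mem_lt

lemma proj_c_of_le {q : ℕ} {γ : Γ} (h : S.rank γ ≤ q) :
    S.proj q ((S.datum γ).c S.proj) = (S.datum γ).c S.proj := by
  have hv := S.valid γ
  rw [CData.c, map_add, map_smul, map_sub, proj_proj, min_eq_left (by linarith [hv.p_lt]),
    S.proj_eq_self (supported_mono (fun _ hη => le_trans (le_of_lt hη) h) hv.a_mem_lt),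
    S.proj_eq_self (supported_mono (fun _ hη => le_trans (le_of_lt hη) h) hv.b_mem)]

lemma proj_c_of_lt {q : ℕ} {γ : Γ} (h : q < S.rank γ) :
    S.proj q ((S.datum γ).c S.proj) = S.proj q (eVec γ) := by
  rw [S.proj_eVec_of_lt h, CData.c, map_add, map_smul, map_sub, proj_proj, min_comm]

lemma c_mem_supported (γ : Γ) :
    (S.datum γ).c S.proj ∈ supported {η | S.rank η < S.rank γ} :=
  have hv := S.valid γ
  add_mem hv.a_mem_lt (Submodule.smul_mem _ _ (sub_mem hv.b_mem (S.proj_mem_supported hv.b_mem)))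

def d (γ : Γ) : ellOne Γ :=
  eVec γ - (S.datum γ).c S.proj

/-- Properties (A) and (B) of the Bourgain–Delbaen construction. -/
def Admissible (d : Γ → ellOne Γ) (P : ℕ → ellOne Γ →L[ℝ] ellOne Γ) : Prop :=
  (∀ q γ, S.rank γ ≤ q → P q (d γ) = d γ) ∧ (∀ q γ, q < S.rank γ → P q (d γ) = 0) ∧
    ∀ γ, eVec γ - d γ = (S.datum γ).c P

theorem admissible : S.Admissible S.d S.proj := by
  refine ⟨fun q γ h => ?_, fun q γ h => ?_, fun γ => sub_sub_cancel _ _⟩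
  · rw [d, map_sub, S.proj_eVec_of_le h, S.proj_c_of_le h]
  · rw [d, map_sub, S.proj_c_of_lt h, sub_self]

variable {S} in
theorem Admissible.eq_d_and_eq_proj {d : Γ → ellOne Γ} {P : ℕ → ellOne Γ →L[ℝ] ellOne Γ}
    (h : S.Admissible d P) : d = S.d ∧ P = S.proj := by
  obtain ⟨hle, hlt, hc⟩ := h
  suffices key : ∀ γ, d γ = S.d γ ∧ ∀ q, P q (eVec γ) = S.proj q (eVec γ) from
    ⟨funext fun γ => (key γ).1, funext fun q => ext_eVec fun γ => (key γ).2 q⟩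
  intro γ
  induction γ using S.induction_rank with
  | step γ ih =>
    have hP (q : ℕ) {x : ellOne Γ} (hx : x ∈ supported {η | S.rank η < S.rank γ}) :
        P q x = S.proj q x :=
      apply_eq_of_supported (fun η hη => (ih η hη).2 q) hx
    have hcγ : (S.datum γ).c P = (S.datum γ).c S.proj := by
      rw [CData.c, CData.c, hP _ (S.valid γ).b_mem]
    have hd : d γ = S.d γ := by
      rw [BDSystem.d, ← hcγ, ← hc γ, sub_sub_cancel]
    refine ⟨hd, fun q => ?_⟩
    have hPd : P q (d γ) = S.proj q (S.d γ) := by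
      rcases le_or_gt (S.rank γ) q with h | h
      · rw [hle q γ h, S.admissible.1 q γ h, hd]
      · rw [hlt q γ h, S.admissible.2.1 q γ h]
    rw [← sub_add_cancel (eVec γ) (d γ), hc γ, hcγ, map_add, map_add, hPd,
      hP q (S.c_mem_supported γ), hd]

end BDSystem

/-- The normal form of `τ(γ)` for `γ ∈ Δ_{q+1}`. Type 0 takes `p = q`, so that `a = α e_ξ` is
supported on `Γ_p` because `ξ ∈ Γ_q`. -/
def BDDatum.toCData {Γ : Type*} (q : ℕ) : BDDatum Γ → CData Γ
  | .type0 α ξ => ⟨α • eVec ξ, q, 0, 0⟩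
  | .type1 p β b => ⟨0, p, β, b⟩
  | .type2 α ξ p β b => ⟨α • eVec ξ, p, β, b⟩

lemma BDDatum.toCData_c {Γ : Type*} (τ : BDDatum Γ) (q : ℕ)
    (P : ℕ → ellOne Γ →L[ℝ] ellOne Γ) :
    (τ.toCData q).c P =
      match τ with
      | .type0 α ξ => α • eVec ξ
      | .type1 p β b => β • ((b : ellOne Γ) - P p b)
      | .type2 α ξ p β b => α • eVec ξ + β • ((b : ellOne Γ) - P p b) := by
  cases τ <;> simp [toCData, CData.c]

namespace BDData

open ellOne

variable {Γ : Type*} (D : BDData Γ)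

lemma exists_mem_Δ (γ : Γ) : ∃ q, 1 ≤ q ∧ γ ∈ D.Δ q := by
  have h : γ ∈ ⋃ q ∈ {q : ℕ | 1 ≤ q}, D.Δ q := D.Δ_cover ▸ Set.mem_univ γ
  simpa using h

def rank (γ : Γ) : ℕ :=
  (D.exists_mem_Δ γ).choose

lemma one_le_rank (γ : Γ) : 1 ≤ D.rank γ :=
  (D.exists_mem_Δ γ).choose_spec.1

lemma mem_Δ_rank (γ : Γ) : γ ∈ D.Δ (D.rank γ) :=
  (D.exists_mem_Δ γ).choose_spec.2

lemma rank_eq_of_mem {q : ℕ} {γ : Γ} (hq : 1 ≤ q) (h : γ ∈ D.Δ q) : D.rank γ = q :=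
  by_contra fun hne =>
    Set.disjoint_left.1 (D.Δ_disjoint _ _ (D.one_le_rank γ) hq hne) (D.mem_Δ_rank γ) h

lemma mem_Γ_iff {q : ℕ} {γ : Γ} : γ ∈ ⋃ r ∈ Set.Icc 1 q, D.Δ r ↔ D.rank γ ≤ q := by
  simp only [Set.mem_iUnion, Set.mem_Icc, exists_prop]
  constructor
  · rintro ⟨r, ⟨hr, hrq⟩, hγ⟩
    exact D.rank_eq_of_mem hr hγ ▸ hrq
  · exact fun h => ⟨D.rank γ, ⟨D.one_le_rank γ, h⟩, D.mem_Δ_rank γ⟩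

lemma mem_supported_of_forall_not_mem_diff {p q : ℕ} {b : ellOne Γ}
    (hb : ∀ γ', γ' ∉ (⋃ r ∈ Set.Icc 1 q, D.Δ r) \ (⋃ r ∈ Set.Icc 1 p, D.Δ r) → b γ' = 0) :
    b ∈ supported {η | D.rank η < q + 1} :=
  fun η hη => hb η fun hmem => hη (Nat.lt_succ_of_le (D.mem_Γ_iff.1 hmem.1))

def datum (γ : Γ) : CData Γ :=
  if D.rank γ = 1 then ⟨0, 0, 0, 0⟩ else (D.τ γ).toCData (D.rank γ - 1)

lemma datum_of_mem_Δ_one {γ : Γ} (h : γ ∈ D.Δ 1) : D.datum γ = ⟨0, 0, 0, 0⟩ :=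
  if_pos (D.rank_eq_of_mem le_rfl h)

lemma datum_of_mem_Δ_succ {q : ℕ} (hq : 1 ≤ q) {γ : Γ} (h : γ ∈ D.Δ (q + 1)) :
    D.datum γ = (D.τ γ).toCData q := by
  rw [datum, D.rank_eq_of_mem (by omega) h, if_neg (by omega), Nat.add_sub_cancel]

lemma datum_valid (γ : Γ) : (D.datum γ).Valid D.rank D.θ (D.rank γ) := by
  by_cases h1 : D.rank γ = 1
  · rw [datum, if_pos h1]
    exact ⟨D.one_le_rank γ, by simp, zero_mem _, le_rfl, D.θ_pos.le, by simp, zero_mem _⟩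
  obtain ⟨q, hq, hγ⟩ : ∃ q, 1 ≤ q ∧ γ ∈ D.Δ (q + 1) :=
    ⟨D.rank γ - 1, by have := D.one_le_rank γ; omega,
      by rw [Nat.sub_add_cancel (D.one_le_rank γ)]; exact D.mem_Δ_rank γ⟩
  have spec := D.τ_spec q hq γ hγ
  rw [D.datum_of_mem_Δ_succ hq hγ, D.rank_eq_of_mem (by omega) hγ]
  generalize D.τ γ = τ at spec ⊢
  cases τ with dsimp only [BDDatum.toCData]
  | type0 α ξ =>
    obtain ⟨hα0, hα1, hξ⟩ := spec
    exact ⟨Nat.lt_succ_self q, norm_smul_eVec_le hα0 hα1 ξ,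
      Submodule.smul_mem _ _ (eVec_mem_supported (D.mem_Γ_iff.1 hξ)), le_rfl, D.θ_pos.le,
      by simp, zero_mem _⟩
  | type1 p β b =>
    obtain ⟨hp, hβ0, hβθ, hb, hb_supp⟩ := spec
    exact ⟨Nat.lt_succ_of_lt hp, by simp, zero_mem _, hβ0.le, hβθ, hb,
      D.mem_supported_of_forall_not_mem_diff hb_supp⟩
  | type2 α ξ p β b =>
    obtain ⟨hα0, hα1, -, hp, hξ, hβ0, hβθ, hb, hb_supp⟩ := spec
    exact ⟨Nat.lt_succ_of_lt hp, norm_smul_eVec_le hα0.le hα1 ξ,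
      Submodule.smul_mem _ _ (eVec_mem_supported (D.mem_Γ_iff.1 hξ)), hβ0.le, hβθ, hb,
      D.mem_supported_of_forall_not_mem_diff hb_supp⟩

def toBDSystem : BDSystem Γ where
  rank := D.rank
  rank_pos := D.one_le_rank
  θ := D.θ
  θ_nonneg := D.θ_pos.le
  θ_lt_half := D.θ_lt_half
  datum := D.datum
  valid := D.datum_valid

lemma mem_Δ_one_or_succ (γ : Γ) : γ ∈ D.Δ 1 ∨ ∃ q, 1 ≤ q ∧ γ ∈ D.Δ (q + 1) := by
  rcases (D.one_le_rank γ).eq_or_lt with h | h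
  · exact .inl (h ▸ D.mem_Δ_rank γ)
  · exact .inr ⟨D.rank γ - 1, by omega, by rw [Nat.sub_add_cancel h.le]; exact D.mem_Δ_rank γ⟩

theorem admissible_iff {d : Γ → ellOne Γ} {P : ℕ → ellOne Γ →L[ℝ] ellOne Γ} :
    Admissible D d P ↔ P 0 = 0 ∧ D.toBDSystem.Admissible d P := by
  have hc₁ {γ : Γ} (h : γ ∈ D.Δ 1) : (D.datum γ).c P = 0 := by
    simp [D.datum_of_mem_Δ_one h, CData.c]
  have hc {q : ℕ} (hq : 1 ≤ q) {γ : Γ} (h : γ ∈ D.Δ (q + 1)) :=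
    D.datum_of_mem_Δ_succ hq h ▸ BDDatum.toCData_c (D.τ γ) q P
  constructor
  · rintro ⟨h0, hA, hB₁, hB⟩
    refine ⟨h0, ⟨fun q γ h => ?_, fun q γ h => ?_, fun γ => ?_⟩⟩
    · exact (hA q ((D.one_le_rank γ).trans h) γ).1 (D.mem_Γ_iff.2 h)
    · rcases Nat.eq_zero_or_pos q with rfl | hq
      · rw [h0]; rfl
      · exact (hA q hq γ).2 (mt D.mem_Γ_iff.1 (not_le.2 h))
    · rcases D.mem_Δ_one_or_succ γ with h | ⟨q, hq, h⟩
      · exact (hB₁ γ h).trans (hc₁ h).symm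
      · exact (hB q hq γ h).trans (hc hq h).symm
  · rintro ⟨h0, hle, hlt, hB⟩
    exact ⟨h0, fun q _ γ => ⟨fun h => hle q γ (D.mem_Γ_iff.1 h),
      fun h => hlt q γ (not_le.1 (mt D.mem_Γ_iff.2 h))⟩,
      fun γ h => (hB γ).trans (hc₁ h), fun q hq γ h => (hB γ).trans (hc hq h)⟩

end BDData

theorem stmt9 {Γ : Type*} (D : BDData Γ) :
    ∃! dP : (Γ → ellOne Γ) × (ℕ → ellOne Γ →L[ℝ] ellOne Γ),
      Admissible D dP.1 dP.2 := by
  set S := D.toBDSystem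
  refine ⟨(S.d, S.proj), D.admissible_iff.2 ⟨S.proj_zero, S.admissible⟩, ?_⟩
  rintro ⟨d, P⟩ h
  obtain ⟨rfl, rfl⟩ := (D.admissible_iff.1 h).2.eq_d_and_eq_proj
  rfl
end
end

section
/- Under the stated Bourgain–Delbaen assumptions, if ((d_γ)_{γ∈Γ}, (P_q)_{q≥0}) is an admissible pair of families, then for every q the operator norm of P_q on ℓ¹(Γ) is at most (1 − 2θ)⁻¹. -/
noncomputable section

/-!
Write `λ = (1 - 2θ)⁻¹`. Since `f = ∑ f γ e_γ` with `‖f‖ = ∑ |f γ|` in `ℓ¹(Γ)`, it suffices to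
show `‖P_q e_γ‖ ≤ λ` for all `q` and all `γ ∈ Δ_{s+1}`, by induction on `s`. By (A), on the
span of the `d_η` the operator `P_q` is the projection onto `span {d_η : η ∈ Γ_q}` along the
other `d_η`; hence `P_q P_p = P_{min p q}` there, and by (B) every `e_η` with `η ∈ Γ_r` lies in
`span {d_η : η ∈ Γ_r}`. If `q > s` then `P_q e_γ = e_γ`; otherwise `P_q e_γ = P_q c_γ`. The
term `β (b - P_p b)` of `c_γ` is killed by `P_q` if `q ≤ p`, and is `β (P_q b - P_p b)`, of norm
at most `2θλ` by induction, if `q > p`. The term `α e_ξ` contributes at most `λ` by induction,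
and at most `1` in the Type 2 case with `q > p`, where `ξ ∈ Γ_p ⊆ Γ_q` and so `P_q e_ξ = e_ξ`.
Since `1 + 2θλ = λ`, every case gives `λ`.
-/

section Projections

variable {R E ι : Type*} [Ring R] [AddCommGroup E] [Module R E] [TopologicalSpace E]
  {d : ι → E} {S : ℕ → Set ι} {P : ℕ → E →L[R] E}

theorem apply_eq_self_of_mem_span (hP : ∀ q i, P q (d i) = (S q).indicator d i) {T : Set ι}
    {q : ℕ} (hT : T ⊆ S q) {x : E} (hx : x ∈ Submodule.span R (d '' T)) : P q x = x :=
  LinearMap.eqOn_span (f := (P q : E →ₗ[R] E)) (g := LinearMap.id)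
    (by rintro _ ⟨i, hi, rfl⟩; simp [hP, Set.indicator_of_mem (hT hi)]) hx

theorem apply_mem_span (hP : ∀ q i, P q (d i) = (S q).indicator d i) {T : Set ι} (p : ℕ)
    {x : E} (hx : x ∈ Submodule.span R (d '' T)) : P p x ∈ Submodule.span R (d '' T) := by
  refine (Submodule.span_le (p := (Submodule.span R (d '' T)).comap (P p : E →ₗ[R] E))).2
    ?_ hx
  rintro _ ⟨i, hi, rfl⟩
  by_cases hip : i ∈ S p
  · simpa [hP, hip] using Submodule.subset_span (R := R) (Set.mem_image_of_mem d hi)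
  · simp [hP, hip]

theorem apply_apply_of_le (hS : Monotone S) (hP : ∀ q i, P q (d i) = (S q).indicator d i)
    {p q : ℕ} (hqp : q ≤ p) {x : E} (hx : x ∈ Submodule.span R (Set.range d)) :
    P q (P p x) = P q x := by
  refine LinearMap.eqOn_span (f := ((P q).comp (P p) : E →ₗ[R] E)) (g := (P q : E →ₗ[R] E))
    ?_ hx
  rintro _ ⟨i, rfl⟩
  by_cases hip : i ∈ S p
  · simp [hP, hip]
  · simp [hP, hip, Set.indicator_of_notMem fun h => hip (hS hqp h)]

theorem apply_apply_of_ge (hS : Monotone S) (hP : ∀ q i, P q (d i) = (S q).indicator d i)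
    {p q : ℕ} (hpq : p ≤ q) {x : E} (hx : x ∈ Submodule.span R (Set.range d)) :
    P q (P p x) = P p x := by
  refine LinearMap.eqOn_span (f := ((P q).comp (P p) : E →ₗ[R] E)) (g := (P p : E →ₗ[R] E))
    ?_ hx
  rintro _ ⟨i, rfl⟩
  by_cases hip : i ∈ S p
  · simp [hP, hip, hS hpq hip]
  · simp [hP, hip]

theorem apply_sub_apply_eq_zero (hS : Monotone S) (hP : ∀ q i, P q (d i) = (S q).indicator d i)
    {p q : ℕ} (hqp : q ≤ p) {x : E} (hx : x ∈ Submodule.span R (Set.range d)) :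
    P q (x - P p x) = 0 := by
  rw [map_sub, apply_apply_of_le hS hP hqp hx, sub_self]

end Projections

theorem norm_apply_sub_apply_le {R E ι : Type*} [Ring R] [SeminormedAddCommGroup E] [Module R E]
    {d : ι → E} {S : ℕ → Set ι} {P : ℕ → E →L[R] E} (hS : Monotone S)
    (hP : ∀ q i, P q (d i) = (S q).indicator d i) {x : E}
    (hx : x ∈ Submodule.span R (Set.range d)) {C : ℝ} (hC : ∀ r, ‖P r x‖ ≤ C) (p q : ℕ) :
    ‖P q (x - P p x)‖ ≤ 2 * C := by
  rcases le_total q p with hqp | hpq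
  · rw [apply_sub_apply_eq_zero hS hP hqp hx, norm_zero]
    linarith [(norm_nonneg _).trans (hC 0)]
  · rw [map_sub, apply_apply_of_ge hS hP hpq hx]
    linarith [norm_sub_le (P q x) (P p x), hC p, hC q]

theorem support_subset_of_forall_notMem_sdiff {α M : Type*} [Zero M] {f : α → M} {A B : Set α}
    (hf : ∀ x, x ∉ A \ B → f x = 0) : Function.support f ⊆ A :=
  Function.support_subset_iff'.2 fun x hx => hf x fun h => hx h.1

section EllOne

variable {Γ : Type*}

theorem norm_eVec (γ : Γ) : ‖eVec γ‖ = 1 := by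
  classical
  rw [eVec, lp.norm_single one_pos, norm_one]

theorem hasSum_smul_eVec (f : ellOne Γ) : HasSum (fun γ => f γ • eVec γ) f := by
  classical
  have : Fact ((1 : ENNReal) ≤ 1) := ⟨le_rfl⟩
  convert lp.hasSum_single (p := 1) ENNReal.one_ne_top f using 2 with γ
  rw [eVec, ← lp.single_smul, smul_eq_mul, mul_one]

theorem mem_of_support_subset {V : Submodule ℝ (ellOne Γ)} {S : Set Γ} (hS : S.Finite)
    (hV : ∀ γ ∈ S, eVec γ ∈ V) {f : ellOne Γ} (hf : Function.support f ⊆ S) : f ∈ V := by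
  have hsum : HasSum (fun γ => f γ • eVec γ) (∑ γ ∈ hS.toFinset, f γ • eVec γ) :=
    hasSum_sum_of_ne_finset_zero fun γ hγ => by
      rw [Function.notMem_support.1 fun h => hγ (hS.mem_toFinset.2 (hf h)), zero_smul]
  rw [(hasSum_smul_eVec f).unique hsum]
  exact V.sum_mem fun γ hγ => V.smul_mem _ (hV γ (hS.mem_toFinset.1 hγ))

theorem norm_apply_le_of_norm_apply_eVec_le {E : Type*} [NormedAddCommGroup E]
    [NormedSpace ℝ E] (T : ellOne Γ →L[ℝ] E) {C : ℝ} {f : ellOne Γ}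
    (hT : ∀ γ, f γ ≠ 0 → ‖T (eVec γ)‖ ≤ C) : ‖T f‖ ≤ C * ‖f‖ := by
  have hnorm : HasSum (fun γ => ‖f γ‖ * C) (‖f‖ * C) := by
    simpa using (lp.hasSum_norm (p := 1) (by norm_num) f).mul_right C
  have hTf : HasSum (fun γ => f γ • T (eVec γ)) (T f) := by
    simpa using T.hasSum (hasSum_smul_eVec f)
  rw [mul_comm]
  refine hTf.norm_le_of_bounded hnorm fun γ => ?_
  by_cases hγ : f γ = 0
  · simp [hγ]
  · rw [norm_smul]; exact mul_le_mul_of_nonneg_left (hT γ hγ) (norm_nonneg _)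

end EllOne

namespace BDData

variable {Γ : Type*} (D : BDData Γ)

/-- The paper's `Γ_q`. -/
abbrev upTo (q : ℕ) : Set Γ := ⋃ r ∈ Set.Icc 1 q, D.Δ r

theorem upTo_mono : Monotone D.upTo :=
  fun _ _ hqq' => Set.biUnion_subset_biUnion_left (Set.Icc_subset_Icc_right hqq')

theorem upTo_finite (q : ℕ) : (D.upTo q).Finite :=
  (Set.finite_Icc 1 q).biUnion fun r hr => D.Δ_finite r hr.1

theorem upTo_zero : D.upTo 0 = ∅ := by
  simp [upTo]

theorem upTo_succ (q : ℕ) : D.upTo (q + 1) = D.upTo q ∪ D.Δ (q + 1) := by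
  rw [upTo, ← Order.succ_eq_add_one, ← Set.insert_Icc_right_eq_Icc_succ (by simp),
    Set.biUnion_insert, Set.union_comm]

theorem notMem_upTo_of_mem_Δ {r q : ℕ} (hqr : q < r) {γ : Γ} (hγ : γ ∈ D.Δ r) :
    γ ∉ D.upTo q := by
  simp only [Set.mem_iUnion, Set.mem_Icc, not_exists]
  intro s ⟨hs, hsq⟩ hγs
  exact Set.disjoint_left.1 (D.Δ_disjoint s r hs (by omega) (by omega)) hγs hγ

theorem exists_mem_upTo (γ : Γ) : ∃ q, γ ∈ D.upTo q := by
  have hγ : γ ∈ ⋃ q ∈ {q : ℕ | 1 ≤ q}, D.Δ q := D.Δ_cover ▸ Set.mem_univ γ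
  obtain ⟨q, hq, hγq⟩ := Set.mem_iUnion₂.1 hγ
  exact ⟨q, Set.mem_iUnion₂.2 ⟨q, ⟨hq, le_rfl⟩, hγq⟩⟩

theorem one_sub_two_mul_θ_pos : 0 < 1 - 2 * D.θ := by
  linarith [D.θ_lt_half]

theorem one_add_two_mul_θ_mul_inv : 1 + 2 * D.θ * (1 - 2 * D.θ)⁻¹ = (1 - 2 * D.θ)⁻¹ := by
  linear_combination -(inv_mul_cancel₀ D.one_sub_two_mul_θ_pos.ne')

theorem one_le_inv_one_sub_two_mul_θ : 1 ≤ (1 - 2 * D.θ)⁻¹ := by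
  nlinarith [D.one_add_two_mul_θ_mul_inv, D.θ_pos, inv_pos.2 D.one_sub_two_mul_θ_pos]

end BDData

namespace Admissible

variable {Γ : Type*} {D : BDData Γ} {d : Γ → ellOne Γ} {P : ℕ → ellOne Γ →L[ℝ] ellOne Γ}

theorem apply_d (h : Admissible D d P) (q : ℕ) (γ : Γ) :
    P q (d γ) = (D.upTo q).indicator d γ := by
  rcases Nat.eq_zero_or_pos q with rfl | hq
  · simp [h.1, D.upTo_zero]
  by_cases hγ : γ ∈ D.upTo q
  · rw [Set.indicator_of_mem hγ, (h.2.1 q hq γ).1 hγ]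
  · rw [Set.indicator_of_notMem hγ, (h.2.1 q hq γ).2 hγ]

theorem eVec_mem_span (h : Admissible D d P) (s : ℕ) {γ : Γ} (hγ : γ ∈ D.upTo s) :
    eVec γ ∈ Submodule.span ℝ (d '' D.upTo s) := by
  induction s generalizing γ with
  | zero => simp [D.upTo_zero] at hγ
  | succ s ih =>
    set V := Submodule.span ℝ (d '' D.upTo (s + 1))
    have hle : Submodule.span ℝ (d '' D.upTo s) ≤ V :=
      Submodule.span_mono (Set.image_mono (D.upTo_mono s.le_succ))
    rcases (D.upTo_succ s ▸ hγ) with hγs | hγs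
    · exact hle (ih hγs)
    have hb : ∀ b : ellOne Γ, Function.support b ⊆ D.upTo s →
        b ∈ Submodule.span ℝ (d '' D.upTo s) := fun b =>
      mem_of_support_subset (D.upTo_finite s) fun _ => ih
    have hbP : ∀ (p : ℕ) (β : ℝ) (b : ellOne Γ), Function.support b ⊆ D.upTo s →
        β • (b - P p b) ∈ V := fun p β b hbs =>
      V.smul_mem β (hle (Submodule.sub_mem _ (hb b hbs) (apply_mem_span h.apply_d p (hb b hbs))))
    rw [← sub_add_cancel (eVec γ) (d γ)]
    refine V.add_mem ?_ (Submodule.subset_span ⟨γ, hγ, rfl⟩)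
    rcases Nat.eq_zero_or_pos s with rfl | hs
    · rw [h.2.2.1 γ hγs]; exact V.zero_mem
    have hc := h.2.2.2 s hs γ hγs
    have hspec := D.τ_spec s hs γ hγs
    cases hτ : D.τ γ with
    | type0 α ξ =>
      simp only [hτ] at hc hspec
      exact hc ▸ V.smul_mem α (hle (ih hspec.2.2))
    | type1 p β b =>
      simp only [hτ] at hc hspec
      exact hc ▸ hbP p β b (support_subset_of_forall_notMem_sdiff hspec.2.2.2.2)
    | type2 α ξ p β b =>
      simp only [hτ] at hc hspec
      obtain ⟨-, -, -, hps, hξ, -, -, -, hbs⟩ := hspec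
      exact hc ▸ V.add_mem (V.smul_mem α (hle (ih (D.upTo_mono hps.le hξ))))
        (hbP p β b (support_subset_of_forall_notMem_sdiff hbs))

theorem mem_span_range_of_support_subset (h : Admissible D d P) {s : ℕ} {b : ellOne Γ}
    (hb : Function.support b ⊆ D.upTo s) : b ∈ Submodule.span ℝ (Set.range d) :=
  Submodule.span_mono (Set.image_subset_range _ _)
    (mem_of_support_subset (D.upTo_finite s) (fun _ => h.eVec_mem_span s) hb)

theorem norm_apply_sub_apply_le_of_support_subset (h : Admissible D d P) {s : ℕ} {C : ℝ}
    (hC : ∀ ξ ∈ D.upTo s, ∀ r, ‖P r (eVec ξ)‖ ≤ C) {b : ellOne Γ}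
    (hb : Function.support b ⊆ D.upTo s) (p q : ℕ) : ‖P q (b - P p b)‖ ≤ 2 * (C * ‖b‖) :=
  norm_apply_sub_apply_le D.upTo_mono h.apply_d
    (h.mem_span_range_of_support_subset hb)
    (fun r => norm_apply_le_of_norm_apply_eVec_le (P r) fun ξ hξ => hC ξ (hb hξ) r) p q

theorem norm_apply_eVec_sub_d_le (h : Admissible D d P) {s : ℕ} (hs : 1 ≤ s)
    (ih : ∀ ξ ∈ D.upTo s, ∀ q, ‖P q (eVec ξ)‖ ≤ (1 - 2 * D.θ)⁻¹) {γ : Γ}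
    (hγ : γ ∈ D.Δ (s + 1)) (q : ℕ) : ‖P q (eVec γ - d γ)‖ ≤ (1 - 2 * D.θ)⁻¹ := by
  set lam := (1 - 2 * D.θ)⁻¹
  have hαξ : ∀ α : ℝ, 0 ≤ α → α ≤ 1 → ∀ ξ ∈ D.upTo s, ‖P q (α • eVec ξ)‖ ≤ lam :=
    fun α hα0 hα1 ξ hξ => by
      rw [map_smul, norm_smul, Real.norm_eq_abs, abs_of_nonneg hα0]
      nlinarith [norm_nonneg (P q (eVec ξ)), ih ξ hξ q]
  have hβb : ∀ (p : ℕ) (β : ℝ) (b : ellOne Γ), 0 < β → β ≤ D.θ → ‖b‖ ≤ 1 →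
      (∀ x, x ∉ D.upTo s \ D.upTo p → b x = 0) →
      ‖P q (β • (b - P p b))‖ ≤ 2 * D.θ * lam := fun p β b hβ0 hβθ hb1 hbs => by
    have hdiff : ‖P q (b - P p b)‖ ≤ 2 * lam := by
      linarith [h.norm_apply_sub_apply_le_of_support_subset ih
        (support_subset_of_forall_notMem_sdiff hbs) p q,
        mul_le_of_le_one_right (inv_pos.2 D.one_sub_two_mul_θ_pos).le hb1]
    rw [map_smul, norm_smul, Real.norm_eq_abs, abs_of_pos hβ0]
    calc β * ‖P q (b - P p b)‖ ≤ D.θ * (2 * lam) :=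
          mul_le_mul hβθ hdiff (norm_nonneg _) D.θ_pos.le
      _ = 2 * D.θ * lam := by ring
  have hc := h.2.2.2 s hs γ hγ
  have hspec := D.τ_spec s hs γ hγ
  cases hτ : D.τ γ with
  | type0 α ξ =>
    simp only [hτ] at hc hspec
    exact hc ▸ hαξ α hspec.1 hspec.2.1 ξ hspec.2.2
  | type1 p β b =>
    simp only [hτ] at hc hspec
    obtain ⟨-, hβ0, hβθ, hb1, hbs⟩ := hspec
    linarith [hc ▸ hβb p β b hβ0 hβθ hb1 hbs, D.one_add_two_mul_θ_mul_inv]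
  | type2 α ξ p β b =>
    simp only [hτ] at hc hspec
    obtain ⟨hα0, hα1, -, hps, hξ, hβ0, hβθ, hb1, hbs⟩ := hspec
    rw [hc, map_add]
    rcases le_or_gt q p with hqp | hpq
    · rw [map_smul (P q) β, apply_sub_apply_eq_zero D.upTo_mono h.apply_d hqp
        (h.mem_span_range_of_support_subset (support_subset_of_forall_notMem_sdiff hbs)),
        smul_zero, add_zero]
      exact hαξ α hα0.le hα1 ξ (D.upTo_mono hps.le hξ)
    rw [map_smul (P q) α, apply_eq_self_of_mem_span h.apply_d (D.upTo_mono hpq.le)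
      (h.eVec_mem_span p hξ)]
    calc ‖α • eVec ξ + P q (β • (b - P p b))‖
        ≤ ‖α • eVec ξ‖ + ‖P q (β • (b - P p b))‖ := norm_add_le _ _
      _ ≤ 1 + 2 * D.θ * lam := by
        rw [norm_smul, norm_eVec, mul_one, Real.norm_eq_abs, abs_of_pos hα0]
        linarith [hβb p β b hβ0 hβθ hb1 hbs]
      _ = lam := D.one_add_two_mul_θ_mul_inv

theorem norm_apply_eVec_le_of_mem_Δ_succ (h : Admissible D d P) {s : ℕ}
    (ih : ∀ ξ ∈ D.upTo s, ∀ q, ‖P q (eVec ξ)‖ ≤ (1 - 2 * D.θ)⁻¹) {γ : Γ}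
    (hγ : γ ∈ D.Δ (s + 1)) (q : ℕ) : ‖P q (eVec γ)‖ ≤ (1 - 2 * D.θ)⁻¹ := by
  rcases lt_or_ge s q with hsq | hqs
  · rw [apply_eq_self_of_mem_span h.apply_d (D.upTo_mono hsq)
      (h.eVec_mem_span _ (D.upTo_succ s ▸ Or.inr hγ)), norm_eVec]
    exact D.one_le_inv_one_sub_two_mul_θ
  have hdγ : P q (d γ) = 0 := by
    rw [h.apply_d, Set.indicator_of_notMem (D.notMem_upTo_of_mem_Δ (Nat.lt_succ_of_le hqs) hγ)]
  rw [← sub_add_cancel (eVec γ) (d γ), map_add, hdγ, add_zero]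
  rcases Nat.eq_zero_or_pos s with rfl | hs
  · rw [h.2.2.1 γ hγ, map_zero, norm_zero]
    exact (inv_pos.2 D.one_sub_two_mul_θ_pos).le
  exact h.norm_apply_eVec_sub_d_le hs ih hγ q

theorem norm_apply_eVec_le (h : Admissible D d P) (s : ℕ) {γ : Γ} (hγ : γ ∈ D.upTo s) (q : ℕ) :
    ‖P q (eVec γ)‖ ≤ (1 - 2 * D.θ)⁻¹ := by
  induction s generalizing γ q with
  | zero => simp [D.upTo_zero] at hγ
  | succ s ih =>
    rcases (D.upTo_succ s ▸ hγ) with hγs | hγs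
    · exact ih hγs q
    · exact h.norm_apply_eVec_le_of_mem_Δ_succ (fun ξ hξ => ih hξ) hγs q

end Admissible

theorem stmt10 {Γ : Type*} (D : BDData Γ) (d : Γ → ellOne Γ)
    (P : ℕ → ellOne Γ →L[ℝ] ellOne Γ) (h : Admissible D d P) :
    ∀ q : ℕ, ‖P q‖ ≤ (1 - 2 * D.θ)⁻¹ := by
  intro q
  refine ContinuousLinearMap.opNorm_le_bound _ (inv_pos.2 D.one_sub_two_mul_θ_pos).le fun f =>
    norm_apply_le_of_norm_apply_eVec_le _ fun γ _ => ?_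
  obtain ⟨s, hs⟩ := D.exists_mem_upTo γ
  exact h.norm_apply_eVec_le s hs q
end
end

section
/- Let X be a real Banach space, k ≥ 1 a natural number, and S : X → X a bounded linear operator with S^k = 0. Let (x_i)_{i∈ℕ} be a sequence in X with ‖x_i‖ = 1 for every i, and let λ_0, …, λ_{k-1} ∈ ℝ be scalars such that ∑_{j=0}^{k-1} λ_j S^j x_i → 0 as i → ∞. Then: (a) if the sequence (S^(k-1) x_i) does not converge to 0, then λ_j = 0 for every j; (b) if m is a natural number with 1 ≤ m ≤ k−1 such that S^m x_i → 0 as i → ∞ while for each j < m the sequence (S^j x_i) does not converge to 0, then λ_j = 0 for all j < m. -/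
/-! Let `p` be the first index with `λ_p ≠ 0`, and suppose `p < m`. Applying `S^(m-1-p)` to the
combination `∑ λ_j S^j x_i → 0` sends the `p`-th term to `λ_p S^(m-1) x_i`, kills the earlier
terms, and turns every later term into an image of `S^m x_i → 0`. Hence `S^(m-1) x_i → 0`,
contradicting the hypothesis. Part (a) is the case `m = k`, where `S^k = 0`. -/

open Filter

section NilpotentCombination

variable {𝕜 M ι : Type*} [DivisionRing 𝕜] [AddCommGroup M] [Module 𝕜 M] [TopologicalSpace M]
  (S : M →L[𝕜] M) {l : Filter ι} {x : ι → M}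

lemma pow_apply_sum_smul_pow_apply {k : ℕ} (lam : Fin k → 𝕜) (r : ℕ) (v : M) :
    (S ^ r) (∑ j : Fin k, lam j • (S ^ (j : ℕ)) v) = ∑ j : Fin k, lam j • (S ^ (r + j)) v := by
  simp [map_sum, pow_add]

lemma tendsto_pow_apply_of_le {m n : ℕ} (hmn : m ≤ n)
    (hSm : Tendsto (fun i => (S ^ m) (x i)) l (nhds 0)) :
    Tendsto (fun i => (S ^ n) (x i)) l (nhds 0) := by
  obtain ⟨d, rfl⟩ := Nat.exists_eq_add_of_le' hmn
  refine (((S ^ d).continuous.tendsto' 0 0 (map_zero _)).comp hSm).congr fun i => ?_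
  rw [pow_add]
  rfl

variable [IsTopologicalAddGroup M] [ContinuousConstSMul 𝕜 M]

lemma tendsto_smul_pow_pred_apply {k m : ℕ} {lam : Fin k → 𝕜} (p : Fin k) (hpm : (p : ℕ) < m)
    (hconv : Tendsto (fun i => ∑ j : Fin k, lam j • (S ^ (j : ℕ)) (x i)) l (nhds 0))
    (hSm : Tendsto (fun i => (S ^ m) (x i)) l (nhds 0))
    (hlow : ∀ j < p, lam j = 0) :
    Tendsto (fun i => lam p • (S ^ (m - 1)) (x i)) l (nhds 0) := by
  set r := m - 1 - p
  have hshift : Tendsto (fun i => ∑ j : Fin k, lam j • (S ^ (r + j)) (x i)) l (nhds 0) :=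
    (((S ^ r).continuous.tendsto' 0 0 (map_zero _)).comp hconv).congr fun i =>
      pow_apply_sum_smul_pow_apply S lam r (x i)
  have hrest : Tendsto (fun i => ∑ j ∈ Finset.univ.erase p, lam j • (S ^ (r + j)) (x i))
      l (nhds 0) := by
    rw [← Finset.sum_const_zero (s := Finset.univ.erase p)]
    refine tendsto_finsetSum _ fun j hj => ?_
    rcases lt_or_gt_of_ne (Finset.ne_of_mem_erase hj) with hjp | hpj
    · simpa [hlow j hjp] using tendsto_const_nhds
    · simpa using (tendsto_pow_apply_of_le S (by omega) hSm).const_smul (lam j)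
  have hsplit : ∀ i, lam p • (S ^ (m - 1)) (x i) = ∑ j : Fin k, lam j • (S ^ (r + j)) (x i) -
      ∑ j ∈ Finset.univ.erase p, lam j • (S ^ (r + j)) (x i) := by
    intro i
    rw [← Finset.add_sum_erase _ _ (Finset.mem_univ p), show r + p = m - 1 by omega]
    abel
  simpa only [sub_zero, ← hsplit] using hshift.sub hrest

theorem eq_zero_of_tendsto_sum_smul_pow_apply {k m : ℕ} {lam : Fin k → 𝕜}
    (hconv : Tendsto (fun i => ∑ j : Fin k, lam j • (S ^ (j : ℕ)) (x i)) l (nhds 0))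
    (hSm : Tendsto (fun i => (S ^ m) (x i)) l (nhds 0))
    (hnot : ¬ Tendsto (fun i => (S ^ (m - 1)) (x i)) l (nhds 0)) (j : Fin k) :
    (j : ℕ) < m → lam j = 0 := by
  induction j using WellFoundedLT.induction with
  | _ p ih =>
    intro hpm
    by_contra hp
    refine hnot ((tendsto_const_smul_iff₀ hp).1 ?_)
    rw [smul_zero]
    exact tendsto_smul_pow_pred_apply S p hpm hconv hSm fun j hj =>
      ih j hj ((Fin.lt_def.1 hj).trans hpm)

end NilpotentCombination

theorem stmt16_general {X : Type*} [NormedAddCommGroup X] [NormedSpace ℝ X]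
    (k : ℕ) (S : X →L[ℝ] X) (hS : S ^ k = 0)
    (x : ℕ → X) (lam : Fin k → ℝ)
    (hconv : Tendsto (fun i => ∑ j : Fin k, lam j • (S ^ (j : ℕ)) (x i)) atTop (nhds 0)) :
    ((¬ Tendsto (fun i => (S ^ (k - 1)) (x i)) atTop (nhds 0)) → ∀ j, lam j = 0) ∧
    (∀ m : ℕ, 1 ≤ m → m ≤ k - 1 →
      Tendsto (fun i => (S ^ m) (x i)) atTop (nhds 0) →
      (∀ j < m, ¬ Tendsto (fun i => (S ^ j) (x i)) atTop (nhds 0)) →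
      ∀ j : Fin k, (j : ℕ) < m → lam j = 0) := by
  refine ⟨fun hnot j => ?_, fun m hm _ hSm hnot => ?_⟩
  · have hSk : Tendsto (fun i => (S ^ k) (x i)) atTop (nhds 0) := by simp [hS]
    exact eq_zero_of_tendsto_sum_smul_pow_apply S hconv hSk hnot j j.isLt
  · exact eq_zero_of_tendsto_sum_smul_pow_apply S hconv hSm (hnot (m - 1) (by omega))

theorem stmt16 {X : Type*} [NormedAddCommGroup X] [NormedSpace ℝ X] [CompleteSpace X]
    (k : ℕ) (hk : 1 ≤ k) (S : X →L[ℝ] X) (hS : S ^ k = 0)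
    (x : ℕ → X) (hx : ∀ i, ‖x i‖ = 1) (lam : Fin k → ℝ)
    (hconv : Tendsto (fun i => ∑ j : Fin k, lam j • (S ^ (j : ℕ)) (x i)) atTop (nhds 0)) :
    ((¬ Tendsto (fun i => (S ^ (k - 1)) (x i)) atTop (nhds 0)) → ∀ j, lam j = 0) ∧
    (∀ m : ℕ, 1 ≤ m → m ≤ k - 1 →
      Tendsto (fun i => (S ^ m) (x i)) atTop (nhds 0) →
      (∀ j < m, ¬ Tendsto (fun i => (S ^ j) (x i)) atTop (nhds 0)) →
      ∀ j : Fin k, (j : ℕ) < m → lam j = 0) :=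
  stmt16_general k S hS x lam hconv
end
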